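/- Let $m_1, m_2 > 2$ be integers and $m = m_1 + m_2$. Define on the interval $I = \left[\frac{m_1 + 2\sqrt{m_1-1}}{2m}, \frac{2m_1 + m_2 - 2\sqrt{m_2-1}}{2m}\right]$ the functions $g(x) = \frac{(m_1-2)^2 - 2m_1^2}{2m^2 x^2} + \frac{m_1}{m x} + \frac{(m_1-2)\sqrt{(2mx - m_1)^2 - 4(m_1-1)}}{2m^2 x^2} + \frac{1}{m^2}\left(m - \frac{m_1}{x}\right)^2$ and $h(y) = \frac{(m_2-2)^2 - 2m_2^2}{2m^2 y^2} + \frac{m_2}{m y} + \frac{(m_2-2)\sqrt{(2my - m_2)^2 - 4(m_2-1)}}{2m^2 y^2} + \frac{1}{m^2}\left(m - \frac{m_2}{y}\right)^2$. Then for all $x, x' \in I$ with $x \le x'$ one has $g(x) \le g(x')$ and $h(1-x) \ge h(1-x')$. -/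

import Mathlib

/-!
Put `u = ((m₁ + m₂) x)⁻¹` and `c = (m₁ - 2) / 2`. Then `g(x) = (√(1 - m₁ u + c² u²) + c u)²`, and
`u ↦ √(1 - a u + c² u²) + c u` decreases wherever the radicand is nonnegative and `u` lies left of
the vertex of the quadratic: squaring reduces the monotonicity to `(2c)² ≤ a²`. The left end of
the interval `I` is exactly where `u` reaches the smaller root of the radicand. Since
`1 - x ∈ [(m₂ + 2√(m₂ - 1)) / (2m), ∞)` for `x ∈ I`, the statement for `h(1 - x)` is the same
monotonicity with the factors swapped.
-/

/-- The upper-bound function for the squared mean curvature of the product,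
coming from the factor `M₁^{m₁}` (the function `h` is `gBound m2 m1`). -/
noncomputable def gBound (m1 m2 : ℕ) (x : ℝ) : ℝ :=
  (((m1 : ℝ) - 2) ^ 2 - 2 * (m1 : ℝ) ^ 2) / (2 * ((m1 : ℝ) + m2) ^ 2 * x ^ 2) +
    (m1 : ℝ) / (((m1 : ℝ) + m2) * x) +
    ((m1 : ℝ) - 2) *
      Real.sqrt ((2 * ((m1 : ℝ) + m2) * x - (m1 : ℝ)) ^ 2 - 4 * ((m1 : ℝ) - 1)) /
      (2 * ((m1 : ℝ) + m2) ^ 2 * x ^ 2) +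
    (1 / ((m1 : ℝ) + m2) ^ 2) * (((m1 : ℝ) + m2) - (m1 : ℝ) / x) ^ 2

open Real Set

def quadraticLeftBranch (a c : ℝ) : Set ℝ :=
  {u | 0 ≤ 1 - a * u + c ^ 2 * u ^ 2 ∧ 2 * c ^ 2 * u ≤ a}

section
variable {a c : ℝ}

lemma two_mul_mul_sqrt_le (hca : 2 * c ≤ a) (hc : 0 ≤ c) {u : ℝ}
    (hu : u ∈ quadraticLeftBranch a c) :
    2 * c * √(1 - a * u + c ^ 2 * u ^ 2) ≤ a - 2 * c ^ 2 * u := by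
  obtain ⟨hQ, hu⟩ := hu
  rw [← pow_le_pow_iff_left₀ (by positivity) (by linarith) two_ne_zero,
    mul_pow, sq_sqrt hQ]
  nlinarith [sq_nonneg c]

lemma antitoneOn_sqrt_add_mul (hca : 2 * c ≤ a) (hc : 0 ≤ c) :
    AntitoneOn (fun u ↦ √(1 - a * u + c ^ 2 * u ^ 2) + c * u)
      (quadraticLeftBranch a c) := by
  rintro u ⟨hQu, -⟩ v hv huv
  have key := two_mul_mul_sqrt_le hca hc hv
  suffices √(1 - a * v + c ^ 2 * v ^ 2) + c * (v - u) ≤ √(1 - a * u + c ^ 2 * u ^ 2) by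
    dsimp only; linarith
  rw [le_sqrt (by positivity) hQu]
  nlinarith [sq_sqrt hv.1, mul_nonneg (sub_nonneg.2 huv) (sub_nonneg.2 key)]

lemma inv_mem_quadraticLeftBranch (ha : 1 ≤ a) {t : ℝ} (ht : (a + 2 * √(a - 1)) / 2 ≤ t) :
    t⁻¹ ∈ quadraticLeftBranch a ((a - 2) / 2) := by
  have hr := sq_sqrt (sub_nonneg.2 ha)
  have hr0 := sqrt_nonneg (a - 1)
  have ht0 : 0 < t := by linarith
  constructor
  · have hdisc : 0 ≤ (t - a / 2) ^ 2 - (a - 1) := by nlinarith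
    have h : 1 - a * t⁻¹ + ((a - 2) / 2) ^ 2 * t⁻¹ ^ 2 = ((t - a / 2) ^ 2 - (a - 1)) / t ^ 2 := by
      field_simp; ring
    rw [h]; positivity
  · rw [mul_inv_le_iff₀ ht0]
    nlinarith

end

lemma gBound_div_eq_sq (m1 m2 : ℕ) (hM : 0 < (m1 : ℝ) + m2) {t : ℝ} (ht : 0 < t)
    (hQ : 0 ≤ 1 - m1 * t⁻¹ + ((m1 - 2) / 2) ^ 2 * t⁻¹ ^ 2) :
    gBound m1 m2 (t / (m1 + m2)) =
      (√(1 - m1 * t⁻¹ + ((m1 - 2) / 2) ^ 2 * t⁻¹ ^ 2) + (m1 - 2) / 2 * t⁻¹) ^ 2 := by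
  have hrad : (2 * ((m1 : ℝ) + m2) * (t / (m1 + m2)) - m1) ^ 2 - 4 * ((m1 : ℝ) - 1) =
      (1 - m1 * t⁻¹ + ((m1 - 2) / 2) ^ 2 * t⁻¹ ^ 2) * (2 * t) ^ 2 := by
    field_simp; ring
  rw [gBound, hrad, sqrt_mul' _ (sq_nonneg _), sqrt_sq (by positivity)]
  have hS := sq_sqrt hQ
  generalize √(1 - m1 * t⁻¹ + ((m1 - 2) / 2) ^ 2 * t⁻¹ ^ 2) = S at hS ⊢
  field_simp at hS ⊢
  linear_combination -hS

theorem gBound_monotoneOn (m1 m2 : ℕ) (hm1 : 2 ≤ m1) :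
    MonotoneOn (gBound m1 m2) (Ici ((m1 + 2 * √((m1 : ℝ) - 1)) / (2 * (m1 + m2)))) := by
  have hm1' : (2 : ℝ) ≤ m1 := by exact_mod_cast hm1
  have hM : 0 < (m1 : ℝ) + m2 := by positivity
  have hc : 0 ≤ ((m1 : ℝ) - 2) / 2 := by linarith
  have hlow {z : ℝ} (hz : z ∈ Ici ((m1 + 2 * √((m1 : ℝ) - 1)) / (2 * (m1 + m2)))) :
      (m1 + 2 * √((m1 : ℝ) - 1)) / 2 ≤ (m1 + m2) * z := by
    rw [mem_Ici, div_le_iff₀ (by positivity)] at hz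
    linarith
  intro x hx y hy hxy
  have htx : 0 < (m1 + m2) * x := by linarith [hlow hx, sqrt_nonneg ((m1 : ℝ) - 1)]
  have hty : (m1 + m2) * x ≤ (m1 + m2) * y := by gcongr
  have hux := inv_mem_quadraticLeftBranch (by linarith) (hlow hx)
  have huy := inv_mem_quadraticLeftBranch (by linarith) (hlow hy)
  rw [← mul_div_cancel_left₀ x hM.ne', ← mul_div_cancel_left₀ y hM.ne',
    gBound_div_eq_sq m1 m2 hM htx hux.1, gBound_div_eq_sq m1 m2 hM (htx.trans_le hty) huy.1]
  refine pow_le_pow_left₀ (add_nonneg (sqrt_nonneg _) (mul_nonneg hc (by positivity))) ?_ 2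
  exact antitoneOn_sqrt_add_mul (by linarith) hc huy hux (inv_anti₀ htx hty)

theorem gBound_monotone (m1 m2 : ℕ) (hm1 : 2 < m1) (hm2 : 2 < m2) :
    ∀ x x' : ℝ,
      x ∈ Set.Icc (((m1 : ℝ) + 2 * Real.sqrt ((m1 : ℝ) - 1)) / (2 * ((m1 : ℝ) + m2)))
        ((2 * (m1 : ℝ) + m2 - 2 * Real.sqrt ((m2 : ℝ) - 1)) / (2 * ((m1 : ℝ) + m2))) →
      x' ∈ Set.Icc (((m1 : ℝ) + 2 * Real.sqrt ((m1 : ℝ) - 1)) / (2 * ((m1 : ℝ) + m2)))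
        ((2 * (m1 : ℝ) + m2 - 2 * Real.sqrt ((m2 : ℝ) - 1)) / (2 * ((m1 : ℝ) + m2))) →
      x ≤ x' →
      gBound m1 m2 x ≤ gBound m1 m2 x' ∧
        gBound m2 m1 (1 - x') ≤ gBound m2 m1 (1 - x) := by
  intro x x' hx hx' hxx'
  have hreflect : 1 - (2 * (m1 : ℝ) + m2 - 2 * √((m2 : ℝ) - 1)) / (2 * (m1 + m2)) =
      (m2 + 2 * √((m2 : ℝ) - 1)) / (2 * (m2 + m1)) := by
    field_simp; ring
  refine ⟨gBound_monotoneOn m1 m2 hm1.le hx.1 hx'.1 hxx', ?_⟩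
  refine gBound_monotoneOn m2 m1 hm2.le ?_ ?_ (by linarith)
  · rw [mem_Ici, ← hreflect]; linarith [hx'.2]
  · rw [mem_Ici, ← hreflect]; linarith [hx.2]
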